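/- arXiv:2204.12445 — 3 statements merged into one kernel-verified Lean document; each statement's English description precedes it below -/
import Mathlib

section
/- Let V be a finite-dimensional real Hilbert space, W ⊂ V an m-dimensional subspace spanned by orthonormal vectors w₁,…,w_m, and V_n ⊂ V an n-dimensional subspace with n ≤ m. If the stability constant β(V_n, W) := inf_{v ∈ V_n, v ≠ 0} ‖Π_W v‖ / ‖v‖ is strictly positive, then for any data vector l ∈ ℝ^m the constrained minimization problem: minimize ‖Π_{V_n^⊥} u‖² over u ∈ V subject to ⟨w_i, u⟩ = l_i for i = 1,…,m, has a unique solution. -/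
/-!
The constraints say exactly that `u` lies in the affine space `u₀ + Wᗮ`, where
`u₀ = ∑ i, l i • w i`. Writing `S = Vn ⊔ Wᗮ`, every feasible `u'` satisfies
`Π_{Sᗮ} (Π_{Vnᗮ} u') = Π_{Sᗮ} u₀`, so the objective is at least `‖Π_{Sᗮ} u₀‖`, and this value
is attained by splitting `Π_S u₀` along `Vn` and `Wᗮ`. Two minimisers have the same `Π_{Vnᗮ}`-image
by strict convexity of the norm (their midpoint is feasible), so they differ by an element of
`Vn ∩ Wᗮ`, which is trivial because `‖Π_W v‖ ≥ β ‖v‖` on `Vn`.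
-/

open InnerProductSpace Submodule

section

variable {V : Type*} [NormedAddCommGroup V] [InnerProductSpace ℝ V]

theorem mem_orthogonal_span_range_iff {ι : Type*} (w : ι → V) (x : V) :
    x ∈ (span ℝ (Set.range w))ᗮ ↔ ∀ i, ⟪w i, x⟫_ℝ = 0 := by
  rw [← span_singleton_le_iff_mem, ← isOrtho_iff_le, isOrtho_span]
  simp [real_inner_comm]

theorem inner_eq_iff_sub_mem_orthogonal_span {ι : Type*} (w : ι → V) {l : ι → ℝ} {u₀ : V}
    (hu₀ : ∀ i, ⟪w i, u₀⟫_ℝ = l i) (u : V) :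
    (∀ i, ⟪w i, u⟫_ℝ = l i) ↔ u - u₀ ∈ (span ℝ (Set.range w))ᗮ := by
  simp only [mem_orthogonal_span_range_iff, inner_sub_right, hu₀, sub_eq_zero]

theorem disjoint_orthogonal_of_mul_norm_le_norm_starProjection {K W : Submodule ℝ V}
    [W.HasOrthogonalProjection] {β : ℝ} (hβ : 0 < β)
    (h : ∀ v ∈ K, β * ‖v‖ ≤ ‖W.starProjection v‖) : Disjoint K Wᗮ := by
  refine disjoint_def.mpr fun v hvK hvW => norm_eq_zero.mp ?_
  have := h v hvK
  rw [W.starProjection_apply_eq_zero_iff.mpr hvW, norm_zero] at this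
  exact le_antisymm (nonpos_of_mul_nonpos_right this hβ) (norm_nonneg v)

section

variable (K U : Submodule ℝ V) [K.HasOrthogonalProjection]

theorem exists_forall_norm_starProjection_orthogonal_le [(K ⊔ U).HasOrthogonalProjection]
    (u₀ : V) : ∃ u, u - u₀ ∈ U ∧
      ∀ u', u' - u₀ ∈ U → ‖Kᗮ.starProjection u‖ ≤ ‖Kᗮ.starProjection u'‖ := by
  set S := K ⊔ U
  obtain ⟨v, hv, x, hx, hvx⟩ := mem_sup.mp (S.starProjection_apply_mem u₀)
  have hres : u₀ - S.starProjection u₀ ∈ Kᗮ :=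
    orthogonal_le le_sup_left (S.sub_starProjection_mem_orthogonal u₀)
  refine ⟨u₀ - x, by simpa using U.neg_mem hx, fun u' hu' => ?_⟩
  have hu : Kᗮ.starProjection (u₀ - x) = Sᗮ.starProjection u₀ := by
    rw [starProjection_orthogonal_val (K := S)]
    refine Kᗮ.eq_starProjection_of_mem_orthogonal hres ?_
    rw [← hvx]
    simpa using K.le_orthogonal_orthogonal hv
  have hu' : Sᗮ.starProjection (Kᗮ.starProjection u') = Sᗮ.starProjection u₀ := by
    rw [← sub_eq_zero, ← map_sub, Sᗮ.starProjection_apply_eq_zero_iff]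
    refine S.le_orthogonal_orthogonal ?_
    rw [starProjection_orthogonal_val, sub_right_comm]
    exact S.sub_mem (mem_sup_right hu') (mem_sup_left (K.starProjection_apply_mem u'))
  rw [hu, ← hu']
  exact Sᗮ.norm_starProjection_apply_le _

theorem eq_of_forall_norm_starProjection_orthogonal_le (hKU : Disjoint K U) {u₀ u u' : V}
    (hu : u - u₀ ∈ U) (hu' : u' - u₀ ∈ U)
    (hmin : ∀ y, y - u₀ ∈ U → ‖Kᗮ.starProjection u‖ ≤ ‖Kᗮ.starProjection y‖)
    (hmin' : ∀ y, y - u₀ ∈ U → ‖Kᗮ.starProjection u'‖ ≤ ‖Kᗮ.starProjection y‖) : u = u' := by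
  set P := Kᗮ.starProjection
  have hnorm : ‖P u‖ = ‖P u'‖ := le_antisymm (hmin u' hu') (hmin' u hu)
  have hmid : (1 / 2 : ℝ) • (u + u') - u₀ ∈ U := by
    convert U.smul_mem (1 / 2 : ℝ) (U.add_mem hu hu') using 1
    module
  have hPeq : P u = P u' := by
    by_contra hne
    have := (norm_midpoint_lt_iff hnorm).mpr hne
    rw [← map_add, ← map_smul] at this
    exact (hmin _ hmid).not_gt this
  have hK : u - u' ∈ K := by
    rw [← K.orthogonal_orthogonal, ← Kᗮ.starProjection_apply_eq_zero_iff, map_sub, hPeq, sub_self]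
  have hU : u - u' ∈ U := by simpa using U.sub_mem hu hu'
  exact sub_eq_zero.mp (disjoint_def.mp hKU _ hK hU)

theorem existsUnique_forall_norm_starProjection_orthogonal_le [(K ⊔ U).HasOrthogonalProjection]
    (hKU : Disjoint K U) (u₀ : V) : ∃! u, u - u₀ ∈ U ∧
      ∀ u', u' - u₀ ∈ U → ‖Kᗮ.starProjection u‖ ≤ ‖Kᗮ.starProjection u'‖ :=
  let ⟨u, hu, hmin⟩ := exists_forall_norm_starProjection_orthogonal_le K U u₀
  ⟨u, ⟨hu, hmin⟩, fun _ ⟨hu', hmin'⟩ =>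
    (eq_of_forall_norm_starProjection_orthogonal_le K U hKU hu hu' hmin hmin').symm⟩

end

end

theorem pbdw_unique_solution_general
    {V : Type*} [NormedAddCommGroup V] [InnerProductSpace ℝ V] [FiniteDimensional ℝ V]
    {m : ℕ} (w : Fin m → V) (hw : Orthonormal ℝ w)
    (W : Submodule ℝ V) (hW : W = Submodule.span ℝ (Set.range w))
    (Vn : Submodule ℝ V)
    (hβ : ∃ β : ℝ, 0 < β ∧ ∀ v ∈ Vn, β * ‖v‖ ≤ ‖(W.orthogonalProjectionOnto v : V)‖)
    (l : Fin m → ℝ) :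
    ∃! u : V,
      (∀ i, ⟪w i, u⟫_ℝ = l i) ∧
      ∀ u' : V, (∀ i, ⟪w i, u'⟫_ℝ = l i) →
        ‖(Vnᗮ.orthogonalProjectionOnto u : V)‖ ^ 2 ≤ ‖(Vnᗮ.orthogonalProjectionOnto u' : V)‖ ^ 2 := by
  obtain ⟨β, hβ, hβle⟩ := hβ
  have hdisj : Disjoint Vn Wᗮ :=
    disjoint_orthogonal_of_mul_norm_le_norm_starProjection hβ (by simpa using hβle)
  subst hW
  simp only [inner_eq_iff_sub_mem_orthogonal_span w (hw.inner_right_fintype l),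
    coe_orthogonalProjectionOnto_apply, sq_le_sq₀ (norm_nonneg _) (norm_nonneg _)]
  exact existsUnique_forall_norm_starProjection_orthogonal_le Vn _ hdisj _

/-- PBDW minimization problem: existence and uniqueness of the solution. -/
theorem pbdw_unique_solution
    {V : Type*} [NormedAddCommGroup V] [InnerProductSpace ℝ V] [FiniteDimensional ℝ V]
    {m n : ℕ} (w : Fin m → V) (hw : Orthonormal ℝ w)
    (W : Submodule ℝ V) (hW : W = Submodule.span ℝ (Set.range w))
    (Vn : Submodule ℝ V) (hVn : Module.finrank ℝ Vn = n) (hnm : n ≤ m)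
    (hβ : ∃ β : ℝ, 0 < β ∧ ∀ v ∈ Vn, β * ‖v‖ ≤ ‖(W.orthogonalProjectionOnto v : V)‖)
    (l : Fin m → ℝ) :
    ∃! u : V,
      (∀ i, ⟪w i, u⟫_ℝ = l i) ∧
      ∀ u' : V, (∀ i, ⟪w i, u'⟫_ℝ = l i) →
        ‖(Vnᗮ.orthogonalProjectionOnto u : V)‖ ^ 2 ≤ ‖(Vnᗮ.orthogonalProjectionOnto u' : V)‖ ^ 2 :=
  pbdw_unique_solution_general w hw W hW Vn hβ l
end

section
/- Under the assumptions that β(V_n, W) > 0 and n ≤ m, the unique solution u* of the PBDW minimization problem (minimize ‖Π_{V_n^⊥} u‖² subject to ⟨w_i, u⟩ = l_i) admits an orthogonal decomposition u* = v* + η* with v* ∈ V_n and η* ∈ W ∩ V_n^⊥. In particular u* ∈ V_n ⊕ (W ∩ V_n^⊥). -/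
/-!
The residual `η* = Π_{Vₙᗮ} u*` lies in `Vₙᗮ` by construction, so the point is that it lies in
`W`. Perturbing `u*` by any `d ∈ Wᗮ` keeps the constraints `⟪wᵢ, u⟫ = lᵢ`, so `t ↦ ‖Π_{Vₙᗮ}(u* + t d)‖`
is minimal at `t = 0`; the first-order condition is `⟪η*, d⟫ = 0`, i.e. `η* ∈ Wᗮᗮ = W`.
-/

open InnerProductSpace

theorem inner_eq_zero_of_forall_norm_le_norm_add_smul {E : Type*} [NormedAddCommGroup E]
    [InnerProductSpace ℝ E] {a b : E} (h : ∀ t : ℝ, ‖a‖ ≤ ‖a + t • b‖) : ⟪a, b⟫_ℝ = 0 := by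
  set c := ⟪a, b⟫_ℝ
  set s := ‖b‖ ^ 2
  have hquad : ∀ t : ℝ, 0 ≤ 2 * t * c + t ^ 2 * s := fun t => by
    have := pow_le_pow_left₀ (norm_nonneg a) (h t) 2
    rw [norm_add_sq_real, real_inner_smul_right, norm_smul, mul_pow, Real.norm_eq_abs,
      sq_abs] at this
    linarith
  -- `t = -c / s` would be the minimiser; the `+ 1` avoids dividing by `s = 0`.
  have hneg := hquad (-c / (s + 1))
  have hvalue : 2 * (-c / (s + 1)) * c + (-c / (s + 1)) ^ 2 * s
      = -(c ^ 2 * (s + 2)) / (s + 1) ^ 2 := by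
    field_simp
    ring
  rw [hvalue, le_div_iff₀ (by positivity)] at hneg
  nlinarith [sq_nonneg c, sq_nonneg ‖b‖]

namespace Submodule

variable {E : Type*} [NormedAddCommGroup E] [InnerProductSpace ℝ E]

theorem starProjection_mem_of_forall_norm_le {K W : Submodule ℝ E} [K.HasOrthogonalProjection]
    [W.HasOrthogonalProjection] {x : E}
    (h : ∀ d ∈ Wᗮ, ‖K.starProjection x‖ ≤ ‖K.starProjection (x + d)‖) :
    K.starProjection x ∈ W := by
  rw [← W.orthogonal_orthogonal]
  intro d hd
  have hfirstOrder : ⟪K.starProjection x, K.starProjection d⟫_ℝ = 0 :=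
    inner_eq_zero_of_forall_norm_le_norm_add_smul fun t => by
      simpa only [map_add, map_smul] using h (t • d) (Wᗮ.smul_mem t hd)
  calc ⟪d, K.starProjection x⟫_ℝ
      = ⟪K.starProjection (K.starProjection x), d⟫_ℝ := by
        rw [starProjection_eq_self_iff.mpr (K.starProjection_apply_mem x), real_inner_comm]
    _ = ⟪K.starProjection x, K.starProjection d⟫_ℝ := K.inner_starProjection_left_eq_right _ _
    _ = 0 := hfirstOrder

theorem exists_add_mem_inf_orthogonal_of_starProjection_mem {K W : Submodule ℝ E}
    [K.HasOrthogonalProjection] {x : E} (h : Kᗮ.starProjection x ∈ W) :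
    ∃ v ∈ K, ∃ η ∈ W ⊓ Kᗮ, x = v + η :=
  ⟨_, K.starProjection_apply_mem x, _, ⟨h, Kᗮ.starProjection_apply_mem x⟩,
    (K.starProjection_add_starProjection_orthogonal x).symm⟩

end Submodule

theorem pbdw_solution_decomposition_general
    {V : Type*} [NormedAddCommGroup V] [InnerProductSpace ℝ V] [FiniteDimensional ℝ V]
    {m : ℕ} (w : Fin m → V)
    (W : Submodule ℝ V) (hW : W = Submodule.span ℝ (Set.range w))
    (Vn : Submodule ℝ V)
    (l : Fin m → ℝ) (ustar : V)
    (hconstr : ∀ i, ⟪w i, ustar⟫_ℝ = l i)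
    (hmin : ∀ u' : V, (∀ i, ⟪w i, u'⟫_ℝ = l i) →
      ‖(Submodule.orthogonalProjectionOnto Vnᗮ ustar : V)‖ ^ 2 ≤ ‖(Submodule.orthogonalProjectionOnto Vnᗮ u' : V)‖ ^ 2) :
    (∃ vstar ∈ Vn, ∃ ηstar ∈ W ⊓ Vnᗮ, ustar = vstar + ηstar) ∧
      ustar ∈ Vn ⊔ (W ⊓ Vnᗮ) := by
  have hresidual : Vnᗮ.starProjection ustar ∈ W := by
    refine Submodule.starProjection_mem_of_forall_norm_le fun d hd => ?_
    have hfeasible : ∀ i, ⟪w i, ustar + d⟫_ℝ = l i := fun i => by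
      have hwi : w i ∈ W := hW ▸ Submodule.subset_span ⟨i, rfl⟩
      rw [inner_add_right, hconstr i, Submodule.inner_right_of_mem_orthogonal hwi hd, add_zero]
    exact (pow_le_pow_iff_left₀ (norm_nonneg _) (norm_nonneg _) two_ne_zero).mp
      (hmin _ hfeasible)
  obtain ⟨v, hv, η, hη, hdecomp⟩ :=
    Submodule.exists_add_mem_inf_orthogonal_of_starProjection_mem hresidual
  exact ⟨⟨v, hv, η, hη, hdecomp⟩, Submodule.mem_sup.mpr ⟨v, hv, η, hη, hdecomp.symm⟩⟩

/-- The PBDW solution decomposes orthogonally as `u* = v* + η*` with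
`v* ∈ Vₙ` and `η* ∈ W ⊓ Vₙᗮ`; in particular `u* ∈ Vₙ ⊔ (W ⊓ Vₙᗮ)`. -/
theorem pbdw_solution_decomposition
    {V : Type*} [NormedAddCommGroup V] [InnerProductSpace ℝ V] [FiniteDimensional ℝ V]
    {m n : ℕ} (w : Fin m → V) (hw : Orthonormal ℝ w)
    (W : Submodule ℝ V) (hW : W = Submodule.span ℝ (Set.range w))
    (Vn : Submodule ℝ V) (hVn : Module.finrank ℝ Vn = n) (hnm : n ≤ m)
    (hβ : ∃ β : ℝ, 0 < β ∧ ∀ v ∈ Vn, β * ‖v‖ ≤ ‖(Submodule.orthogonalProjectionOnto W v : V)‖)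
    (l : Fin m → ℝ) (ustar : V)
    (hconstr : ∀ i, ⟪w i, ustar⟫_ℝ = l i)
    (hmin : ∀ u' : V, (∀ i, ⟪w i, u'⟫_ℝ = l i) →
      ‖(Submodule.orthogonalProjectionOnto Vnᗮ ustar : V)‖ ^ 2 ≤ ‖(Submodule.orthogonalProjectionOnto Vnᗮ u' : V)‖ ^ 2) :
    (∃ vstar ∈ Vn, ∃ ηstar ∈ W ⊓ Vnᗮ, ustar = vstar + ηstar) ∧
      ustar ∈ Vn ⊔ (W ⊓ Vnᗮ) :=
  pbdw_solution_decomposition_general w W hW Vn l ustar hconstr hmin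
end

section
/- Let u ∈ V and let A(w) = v* + η* be the PBDW reconstruction from the observations l_i = ⟨w_i, u⟩. Then the reconstruction error satisfies ‖u − A(w)‖ ≤ β(V_n, W)^{-1} · ‖u − Π_{V_n ⊕ (W ∩ V_n^⊥)} u‖. -/
/-!
The error `e = u - A(w)` is orthogonal to `W`, since `u` and `A(w)` have the same measurements.
Minimality of `‖Π_{Vₙᗮ} A(w)‖` over the affine space `A(w) + Wᗮ` forces `Π_{Vₙᗮ} A(w) ∈ W`, so
`A(w) ∈ Vₙ ⊕ (W ∩ Vₙᗮ)` and `u - Π u = e - Π_{Vₙ} e`. Finally, the cosine of the angle between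
`Wᗮ` and `Vₙ` is at most `√(1 - β²)`, which gives `β ‖e‖ ≤ ‖e - v‖` for every `v ∈ Vₙ`.
-/

open InnerProductSpace

namespace Submodule

section RCLike

variable {𝕜 E : Type*} [RCLike 𝕜] [NormedAddCommGroup E] [InnerProductSpace 𝕜 E]

theorem mem_orthogonal_span_range_iff {ι : Type*} (w : ι → E) (x : E) :
    x ∈ (span 𝕜 (Set.range w))ᗮ ↔ ∀ i, ⟪w i, x⟫_𝕜 = 0 := by
  refine ⟨fun hx i => hx _ (subset_span (Set.mem_range_self i)), fun hx => ?_⟩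
  have hspan : span 𝕜 (Set.range w) ≤ (𝕜 ∙ x)ᗮ :=
    span_le.2 <| Set.range_subset_iff.2 fun i =>
      mem_orthogonal_singleton_iff_inner_left.2 (hx i)
  exact (isOrtho_iff_le.2 <| isOrtho_comm.1 <| isOrtho_iff_le.2 hspan) (mem_span_singleton_self x)

variable (K W : Submodule 𝕜 E) [K.HasOrthogonalProjection]

theorem mem_sup_inf_orthogonal_of_starProjection_orthogonal_mem {x : E}
    (hx : Kᗮ.starProjection x ∈ W) : x ∈ K ⊔ (W ⊓ Kᗮ) := by
  rw [← K.starProjection_add_starProjection_orthogonal x]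
  exact add_mem (mem_sup_left (K.starProjection_apply_mem x))
    (mem_sup_right ⟨hx, Kᗮ.starProjection_apply_mem x⟩)

theorem starProjection_sup_inf_orthogonal_of_mem_orthogonal
    [(K ⊔ (W ⊓ Kᗮ)).HasOrthogonalProjection] {e : E} (he : e ∈ Wᗮ) :
    (K ⊔ (W ⊓ Kᗮ)).starProjection e = K.starProjection e := by
  refine eq_starProjection_of_mem_orthogonal (mem_sup_left (K.starProjection_apply_mem e)) ?_
  rw [← inf_orthogonal]
  refine ⟨K.sub_starProjection_mem_orthogonal e, sub_mem ?_ ?_⟩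
  · exact orthogonal_le inf_le_left he
  · exact orthogonal_le inf_le_right (K.le_orthogonal_orthogonal (K.starProjection_apply_mem e))

end RCLike

section Real

variable {E : Type*} [NormedAddCommGroup E] [InnerProductSpace ℝ E]

theorem inner_eq_zero_of_forall_norm_sq_le_norm_add_smul_sq {a b : E}
    (h : ∀ t : ℝ, ‖a‖ ^ 2 ≤ ‖a + t • b‖ ^ 2) : ⟪a, b⟫_ℝ = 0 := by
  rcases eq_or_ne b 0 with rfl | hb
  · exact inner_zero_right a
  have hb2 : 0 < ‖b‖ ^ 2 := by positivity
  have ht := h (-⟪a, b⟫_ℝ / ‖b‖ ^ 2)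
  rw [norm_add_sq_real, inner_smul_right, norm_smul, mul_pow, Real.norm_eq_abs, sq_abs] at ht
  have hsq : ⟪a, b⟫_ℝ ^ 2 ≤ 0 := by
    field_simp at ht
    nlinarith
  exact pow_eq_zero_iff two_ne_zero |>.1 (le_antisymm hsq (sq_nonneg _))

theorem starProjection_mem_of_forall_norm_sq_le (S W : Submodule ℝ E) [S.HasOrthogonalProjection]
    [W.HasOrthogonalProjection] {x : E}
    (hx : ∀ y ∈ Wᗮ, ‖S.starProjection x‖ ^ 2 ≤ ‖S.starProjection (x + y)‖ ^ 2) :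
    S.starProjection x ∈ W := by
  rw [← W.orthogonal_orthogonal, mem_orthogonal']
  intro y hy
  have hPy : ⟪S.starProjection x, S.starProjection y⟫_ℝ = 0 :=
    inner_eq_zero_of_forall_norm_sq_le_norm_add_smul_sq fun t => by
      simpa only [map_add, map_smul] using hx (t • y) (smul_mem _ t hy)
  rwa [← inner_starProjection_left_eq_right,
    starProjection_eq_self_iff.2 (S.starProjection_apply_mem x)] at hPy

theorem mul_norm_le_norm_sub_of_mem_orthogonal {W : Submodule ℝ E} [W.HasOrthogonalProjection]
    {β : ℝ} (hβ₀ : 0 ≤ β) (hβ₁ : β ≤ 1) {e v : E} (he : e ∈ Wᗮ)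
    (hv : β * ‖v‖ ≤ ‖W.starProjection v‖) : β * ‖e‖ ≤ ‖e - v‖ := by
  set p := ‖Wᗮ.starProjection v‖
  have hinner : ⟪e, v⟫_ℝ ≤ ‖e‖ * p :=
    calc ⟪e, v⟫_ℝ = ⟪e, Wᗮ.starProjection v⟫_ℝ := by
          rw [← inner_starProjection_left_eq_right, starProjection_eq_self_iff.2 he]
      _ ≤ ‖e‖ * p := real_inner_le_norm _ _
  have hp : p ^ 2 ≤ (1 - β ^ 2) * ‖v‖ ^ 2 := by
    have hPv := pow_le_pow_left₀ (by positivity) hv 2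
    rw [mul_pow] at hPv
    linarith [W.norm_sq_eq_add_norm_sq_starProjection v]
  have hγ : 0 ≤ 1 - β ^ 2 := by nlinarith
  have hamgm : 2 * ‖e‖ * p ≤ (1 - β ^ 2) * ‖e‖ ^ 2 + ‖v‖ ^ 2 := by
    refine (pow_le_pow_iff_left₀ (by positivity) (by positivity) two_ne_zero).1 ?_
    nlinarith [sq_nonneg ((1 - β ^ 2) * ‖e‖ ^ 2 - ‖v‖ ^ 2),
      mul_le_mul_of_nonneg_left hp (sq_nonneg (2 * ‖e‖))]
  refine (pow_le_pow_iff_left₀ (by positivity) (norm_nonneg _) two_ne_zero).1 ?_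
  rw [norm_sub_sq_real]
  nlinarith

end Real

end Submodule

section InfSup

variable {E : Type*} [NormedAddCommGroup E] [InnerProductSpace ℝ E]
  (Vn W : Submodule ℝ E) [W.HasOrthogonalProjection]

/-- `β(Vₙ, W)`; it is `0` when `Vn = ⊥`, as `sInf ∅ = 0`. -/
noncomputable def infSupConstant : ℝ :=
  sInf {r : ℝ | ∃ v ∈ Vn, v ≠ 0 ∧ r = ‖W.starProjection v‖ / ‖v‖}

variable {Vn W}

theorem infSupConstant_le_div {v : E} (hv : v ∈ Vn) (hv₀ : v ≠ 0) :
    infSupConstant Vn W ≤ ‖W.starProjection v‖ / ‖v‖ :=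
  csInf_le ⟨0, fun _ ⟨_, _, _, hr⟩ => hr ▸ by positivity⟩ ⟨v, hv, hv₀, rfl⟩

theorem infSupConstant_mul_norm_le {v : E} (hv : v ∈ Vn) :
    infSupConstant Vn W * ‖v‖ ≤ ‖W.starProjection v‖ := by
  rcases eq_or_ne v 0 with rfl | hv₀
  · simp
  · exact (le_div_iff₀ (norm_pos_iff.2 hv₀)).1 (infSupConstant_le_div hv hv₀)

theorem infSupConstant_le_one : infSupConstant Vn W ≤ 1 := by
  by_cases h : ∃ v ∈ Vn, v ≠ 0
  · obtain ⟨v, hv, hv₀⟩ := h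
    exact (infSupConstant_le_div hv hv₀).trans <|
      (div_le_one (norm_pos_iff.2 hv₀)).2 (W.norm_starProjection_apply_le v)
  · have hempty : {r : ℝ | ∃ v ∈ Vn, v ≠ 0 ∧ r = ‖W.starProjection v‖ / ‖v‖} = ∅ :=
      Set.eq_empty_of_forall_notMem fun _ ⟨v, hv, hv₀, _⟩ => h ⟨v, hv, hv₀⟩
    rw [infSupConstant, hempty, Real.sInf_empty]
    exact zero_le_one

end InfSup

theorem pbdw_error_bound_general
    {V : Type*} [NormedAddCommGroup V] [InnerProductSpace ℝ V] [FiniteDimensional ℝ V]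
    {m : ℕ} (w : Fin m → V)
    (W : Submodule ℝ V) (hW : W = Submodule.span ℝ (Set.range w))
    (Vn : Submodule ℝ V)
    (β : ℝ)
    (hβ : β = sInf {r : ℝ | ∃ v ∈ Vn, v ≠ 0 ∧ r = ‖(Submodule.orthogonalProjectionOnto W v : V)‖ / ‖v‖})
    (hβpos : 0 < β)
    (u : V) (l : Fin m → ℝ) (hl : ∀ i, l i = ⟪w i, u⟫_ℝ)
    (ustar : V)
    (hconstr : ∀ i, ⟪w i, ustar⟫_ℝ = l i)
    (hmin : ∀ u' : V, (∀ i, ⟪w i, u'⟫_ℝ = l i) →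
      ‖(Submodule.orthogonalProjectionOnto Vnᗮ ustar : V)‖ ^ 2 ≤ ‖(Submodule.orthogonalProjectionOnto Vnᗮ u' : V)‖ ^ 2) :
    ‖u - ustar‖ ≤ β⁻¹ * ‖u - (Submodule.orthogonalProjectionOnto (Vn ⊔ (W ⊓ Vnᗮ)) u : V)‖ := by
  obtain rfl : β = infSupConstant Vn W := hβ
  rw [← Submodule.starProjection_apply, le_inv_mul_iff₀ hβpos]
  have hWorth : ∀ x, x ∈ Wᗮ ↔ ∀ i, ⟪w i, x⟫_ℝ = 0 := fun x =>
    hW ▸ Submodule.mem_orthogonal_span_range_iff w x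
  have herr : u - ustar ∈ Wᗮ :=
    (hWorth _).2 fun i => by rw [inner_sub_right, ← hl, hconstr, sub_self]
  have hustar : ustar ∈ Vn ⊔ (W ⊓ Vnᗮ) :=
    Vn.mem_sup_inf_orthogonal_of_starProjection_orthogonal_mem W <|
      Vnᗮ.starProjection_mem_of_forall_norm_sq_le W fun y hy => hmin _ fun i => by
        rw [inner_add_right, hconstr, (hWorth y).1 hy i, add_zero]
  have hres : u - (Vn ⊔ (W ⊓ Vnᗮ)).starProjection u =
      (u - ustar) - Vn.starProjection (u - ustar) := by
    rw [← Vn.starProjection_sup_inf_orthogonal_of_mem_orthogonal W herr, map_sub,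
      Submodule.starProjection_eq_self_iff.2 hustar]
    abel
  rw [hres]
  exact Submodule.mul_norm_le_norm_sub_of_mem_orthogonal hβpos.le infSupConstant_le_one herr
    (infSupConstant_mul_norm_le (Vn.starProjection_apply_mem _))

/-- PBDW a priori error bound:
`‖u − A(w)‖ ≤ β(Vₙ, W)⁻¹ ‖u − Π_{Vₙ ⊕ (W ∩ Vₙᗮ)} u‖`. -/
theorem pbdw_error_bound
    {V : Type*} [NormedAddCommGroup V] [InnerProductSpace ℝ V] [FiniteDimensional ℝ V]
    {m n : ℕ} (w : Fin m → V) (hw : Orthonormal ℝ w)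
    (W : Submodule ℝ V) (hW : W = Submodule.span ℝ (Set.range w))
    (Vn : Submodule ℝ V) (hVn : Module.finrank ℝ Vn = n) (hnm : n ≤ m)
    (β : ℝ)
    (hβ : β = sInf {r : ℝ | ∃ v ∈ Vn, v ≠ 0 ∧ r = ‖(Submodule.orthogonalProjectionOnto W v : V)‖ / ‖v‖})
    (hβpos : 0 < β)
    (u : V) (l : Fin m → ℝ) (hl : ∀ i, l i = ⟪w i, u⟫_ℝ)
    (ustar : V)
    (hconstr : ∀ i, ⟪w i, ustar⟫_ℝ = l i)
    (hmin : ∀ u' : V, (∀ i, ⟪w i, u'⟫_ℝ = l i) →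
      ‖(Submodule.orthogonalProjectionOnto Vnᗮ ustar : V)‖ ^ 2 ≤ ‖(Submodule.orthogonalProjectionOnto Vnᗮ u' : V)‖ ^ 2) :
    ‖u - ustar‖ ≤ β⁻¹ * ‖u - (Submodule.orthogonalProjectionOnto (Vn ⊔ (W ⊓ Vnᗮ)) u : V)‖ :=
  pbdw_error_bound_general w W hW Vn β hβ hβpos u l hl ustar hconstr hmin
end
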